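/- arXiv:1803.03583 — 3 statements merged into one kernel-verified Lean document; each statement's English description precedes it below -/
import Mathlib

section
/- Let R be a full Suslin tree and let A be a club-minimal Aronszajn tree. Then for no s ∈ R and no club D does there exist a level-preserving order-preserving injection from R_s↾D into A. (Claim established inside the proof of the paper's Main Lemma.) -/
noncomputable section

open Set

/-- The first uncountable ordinal `ω₁`. -/
def omega_1 : Ordinal := (Cardinal.aleph 1).ord

universe v

/-- A tree structure on a partial order `T`: a height function witnessing that the set of
predecessors of each node is well-ordered, with `ht t` its order type.  The fields say that
the predecessors of a node form a chain, that heights are strictly increasing, and that a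
node of height `α` has (necessarily unique) predecessors of every height `ξ < α`. -/
structure TreeHt (T : Type*) [PartialOrder T] where
  ht : T → Ordinal.{v}
  chain_below : ∀ t : T, IsChain (· ≤ ·) {s : T | s < t}
  ht_lt : ∀ {s t : T}, s < t → ht s < ht t
  exists_below : ∀ t : T, ∀ ξ < ht t, ∃ s, s < t ∧ ht s = ξ

variable {T S : Type*} [PartialOrder T] [PartialOrder S]

/-- The `α`-th level of a tree. -/
def TreeHt.level (tr : TreeHt T) (α : Ordinal) : Set T := {t | tr.ht t = α}

/-- An `ℵ₁`-tree: height `ω₁` (all heights are countable and all countable levels are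
nonempty) and all levels countable. -/
def IsAleph1Tree (tr : TreeHt T) : Prop :=
  (∀ t : T, tr.ht t < omega_1) ∧
  (∀ α < omega_1, (tr.level α).Nonempty) ∧
  (∀ α : Ordinal, (tr.level α).Countable)

/-- An Aronszajn tree: an `ℵ₁`-tree with no uncountable chain. -/
def IsAronszajn (tr : TreeHt T) : Prop :=
  IsAleph1Tree tr ∧ ∀ c : Set T, IsChain (· ≤ ·) c → c.Countable

/-- A Suslin tree: an Aronszajn tree with no uncountable antichain. -/
def IsSuslin (tr : TreeHt T) : Prop :=
  IsAronszajn tr ∧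
  ∀ a : Set T, (∀ x ∈ a, ∀ y ∈ a, x ≠ y → ¬ (x ≤ y) ∧ ¬ (y ≤ x)) → a.Countable

/-- The carrier of the derived tree `R_{a 0} ⊗ … ⊗ R_{a n}`: tuples lying above the `a i`
with all coordinates of equal height, ordered coordinatewise. -/
def derivedTreeSet (tr : TreeHt T) {n : ℕ} (a : Fin (n + 1) → T) :
    Set (Fin (n + 1) → T) :=
  {f | (∀ i, a i ≤ f i) ∧ ∃ ε, ∀ i, tr.ht (f i) = ε}

/-- A full Suslin tree: a Suslin tree all of whose derived trees (with their canonical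
height function) are Suslin. -/
def IsFullSuslin (tr : TreeHt T) : Prop :=
  IsSuslin tr ∧
  ∀ (n : ℕ) (δ : Ordinal), δ < omega_1 →
    ∀ a : Fin (n + 1) → T, Function.Injective a → (∀ i, tr.ht (a i) = δ) →
      ∃ dtr : TreeHt ↥(derivedTreeSet tr a),
        (∀ f : ↥(derivedTreeSet tr a), dtr.ht f = tr.ht (f.1 0) - δ) ∧ IsSuslin dtr

/-- A club (closed unbounded) subset of `ω₁`. -/
def IsClubOmega1 (C : Set Ordinal) : Prop :=
  (∀ α ∈ C, α < omega_1) ∧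
  (∀ α < omega_1, ∃ β ∈ C, α ≤ β) ∧
  (∀ α < omega_1, α ≠ 0 → (∀ β < α, ∃ γ ∈ C, β < γ ∧ γ < α) → α ∈ C)

/-- `f` is an order preserving injection of `T↾C` into `S` (only the values of `f` on
`T↾C = {t | ht t ∈ C}` are constrained). -/
def ClubEmbedding (trT : TreeHt T) (trS : TreeHt S) (C : Set Ordinal) (f : T → S) : Prop :=
  (∀ t₁ t₂ : T, trT.ht t₁ ∈ C → trT.ht t₂ ∈ C → t₁ < t₂ → f t₁ < f t₂) ∧
  (∀ t₁ t₂ : T, trT.ht t₁ ∈ C → trT.ht t₂ ∈ C → f t₁ = f t₂ → t₁ = t₂)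

/-- `T` club-embeds into `S`. -/
def ClubEmbeds (trT : TreeHt T) (trS : TreeHt S) : Prop :=
  ∃ C : Set Ordinal, IsClubOmega1 C ∧ ∃ f : T → S, ClubEmbedding trT trS C f

/-- A (downward closed, pruned) subtree of an `ℵ₁`-tree. -/
def IsSubtree (tr : TreeHt T) (S' : Set T) : Prop :=
  (∀ s ∈ S', ∀ t, t ≤ s → t ∈ S') ∧
  (∀ s ∈ S', ∀ β, tr.ht s ≤ β → β < omega_1 → ∃ t ∈ S', s ≤ t ∧ tr.ht t = β)

/-- A club-minimal tree: it club-embeds into each of its subtrees. -/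
def ClubMinimal (tr : TreeHt T) : Prop :=
  ∀ S' : Set T, IsSubtree tr S' →
    ∃ C : Set Ordinal, IsClubOmega1 C ∧ ∃ f : T → T,
      (∀ t, tr.ht t ∈ C → f t ∈ S') ∧ ClubEmbedding tr tr C f

/-- A ladder system on `ω₁`: for each countable limit `α`, `η α` is a cofinal subset of `α`
of order type `ω`. -/
def IsLadderSystem (η : Ordinal → Set Ordinal) : Prop :=
  ∀ α, α < omega_1 → Order.IsSuccLimit α →
    (∀ ξ ∈ η α, ξ < α) ∧ (∀ β < α, ∃ ξ ∈ η α, β < ξ) ∧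
    (∀ β < α, {ξ ∈ η α | ξ ≤ β}.Finite)

/-- `f : S' → 2` is an `A`-uniformization of the constant 2-colouring of `η` coded by `c`
(the colour on the ladder `η α` being constantly `c α`): `S'` is a subtree and for every
node `t` of `S'` of limit height `α`, `f (t↾ξ) = c α` for all but finitely many `ξ ∈ η α`. -/
def IsUniformization (tr : TreeHt T) (η : Ordinal → Set Ordinal)
    (c : Ordinal → Fin 2) (S' : Set T) (f : T → Fin 2) : Prop :=
  IsSubtree tr S' ∧
  ∀ α, α < omega_1 → Order.IsSuccLimit α → ∀ t ∈ S', tr.ht t = α →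
    {ξ ∈ η α | ∃ s, s < t ∧ tr.ht s = ξ ∧ f s ≠ c α}.Finite

/-- The linear order `ω₁` (the set of countable ordinals). -/
abbrev Omega1Type : Type 1 := {o : Ordinal // o < omega_1}

/-- A minimal uncountable linear order: uncountable, and order-embeds into each of its
uncountable suborders. -/
def MinimalUncountableLinearOrder (L : Type*) [LinearOrder L] : Prop :=
  ¬ Countable L ∧ ∀ S' : Set L, ¬ S'.Countable → Nonempty (L ↪o ↥S')

/-!
Given such an `f`, pick incomparable `s₁`, `s₀` above `s` on a common level of `D`. The part of
`A` generated by `f[R_{s₀}↾D]` is a subtree, so club-minimality gives a club-embedding `g` of `A`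
into it. On the unboundedly many levels of `D` where `g` does not lower heights, pulling `g ∘ f`
back along `f` yields a level- and order-preserving map `h` from the cone above `s₁` into the cone
above `s₀`. In the Suslin derived tree `R_{s₁} ⊗ R_{s₀}` the pairs `(r, u)` with `u ≠ h r` are then
dense and upward closed, which is impossible.
-/

theorem omega_1_eq_omega_one : omega_1 = Ordinal.omega 1 :=
  Cardinal.ord_aleph 1

theorem add_one_lt_omega_1 {α : Ordinal} (h : α < omega_1) : α + 1 < omega_1 :=
  (Cardinal.isSuccLimit_ord (Cardinal.aleph0_le_aleph 1)).add_one_lt h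

theorem add_lt_omega_1 {α β : Ordinal} (hα : α < omega_1) (hβ : β < omega_1) :
    α + β < omega_1 := by
  refine Cardinal.lt_ord.2 ?_
  rw [Ordinal.card_add]
  exact Cardinal.add_lt_of_lt (Cardinal.aleph0_le_aleph 1) (Cardinal.lt_ord.1 hα)
    (Cardinal.lt_ord.1 hβ)

theorem countable_Iio_of_lt_omega_1 {α : Ordinal} (h : α < omega_1) : (Iio α).Countable := by
  rw [← Cardinal.le_aleph0_iff_set_countable, Cardinal.mk_Iio_ordinal, Cardinal.lift_le_aleph0,
    ← Cardinal.lt_aleph_one_iff]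
  exact Cardinal.lt_ord.1 h

theorem exists_lt_omega_1_forall_lt {ι : Type*} [Countable ι] {f : ι → Ordinal}
    (hf : ∀ i, f i < omega_1) : ∃ α < omega_1, ∀ i, f i < α := by
  refine ⟨⨆ i, (f i + 1), ?_, fun i => (lt_add_one (f i)).trans_le
    (Ordinal.le_iSup (fun i => f i + 1) i)⟩
  have hf' : ∀ i, f i + 1 < Ordinal.omega 1 := fun i =>
    omega_1_eq_omega_one ▸ add_one_lt_omega_1 (hf i)
  exact omega_1_eq_omega_one ▸ Ordinal.iSup_lt_omega_one hf'

def IsUnboundedOmega1 (E : Set Ordinal) : Prop :=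
  ∀ α < omega_1, ∃ γ ∈ E, α ≤ γ ∧ γ < omega_1

namespace IsClubOmega1

variable {C D : Set Ordinal}

theorem isUnboundedOmega1 (hC : IsClubOmega1 C) : IsUnboundedOmega1 C := fun α hα => by
  obtain ⟨γ, hγC, hαγ⟩ := hC.2.1 α hα
  exact ⟨γ, hγC, hαγ, hC.1 γ hγC⟩

theorem iSup_mem (hC : IsClubOmega1 C) {e : ℕ → Ordinal} (he : ∀ n, e n < omega_1)
    (he_lt : ∀ n, e n < e (n + 1)) (hCe : ∀ n, ∃ c ∈ C, e n ≤ c ∧ c ≤ e (n + 1)) :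
    ⨆ n, e n ∈ C := by
  have hlt : ∀ n, e n < ⨆ n, e n := fun n =>
    (he_lt n).trans_le (Ordinal.le_iSup e (n + 1))
  obtain ⟨α, hα, heα⟩ := exists_lt_omega_1_forall_lt he
  refine hC.2.2 _ ((Ordinal.iSup_le fun n => (heα n).le).trans_lt hα)
    (hlt 0).ne_bot fun β hβ => ?_
  obtain ⟨n, hn⟩ := Ordinal.lt_iSup_iff.1 hβ
  obtain ⟨c, hcC, hnc, hcn⟩ := hCe n
  exact ⟨c, hcC, hn.trans_le hnc, hcn.trans_lt (hlt (n + 1))⟩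

theorem exists_inter_closed (hC : IsClubOmega1 C) (hD : IsClubOmega1 D)
    {P : Ordinal → Ordinal → Prop} (hP : ∀ ξ < omega_1, ∃ η < omega_1, P ξ η)
    {α : Ordinal} (hα : α < omega_1) :
    ∃ γ ∈ C ∩ D, α ≤ γ ∧ ∀ ξ < γ, ∃ η < γ, P ξ η := by
  choose! η hη hP using hP
  -- `γ` is the limit of the iterates of a map `next` whose values lie in `D`, above a point of
  -- `C`, and above `η ξ` for every smaller `ξ`.
  have hnext : ∀ x < omega_1, ∃ y ∈ D, x < y ∧ (∃ c ∈ C, x ≤ c ∧ c ≤ y) ∧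
      ∀ ξ < x, η ξ < y := by
    intro x hx
    have := (countable_Iio_of_lt_omega_1 hx).to_subtype
    obtain ⟨b, hb, hηb⟩ := exists_lt_omega_1_forall_lt
      (f := fun ξ : Iio x => η ξ) fun ξ => hη ξ (ξ.2.trans hx)
    obtain ⟨c, hcC, hc⟩ := hC.2.1 (max (x + 1) b) (max_lt (add_one_lt_omega_1 hx) hb)
    obtain ⟨d, hdD, hcd⟩ := hD.2.1 c (hC.1 c hcC)
    have hbd := (le_max_right _ _).trans (hc.trans hcd)
    exact ⟨d, hdD, (lt_add_one x).trans_le ((le_max_left _ _).trans (hc.trans hcd)),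
      ⟨c, hcC, ((lt_add_one x).trans_le ((le_max_left _ _).trans hc)).le, hcd⟩,
      fun ξ hξ => (hηb ⟨ξ, hξ⟩).trans_le hbd⟩
  choose! next hnextD hnext_lt hnextC hnextη using hnext
  set e : ℕ → Ordinal := fun n => next^[n] α
  have he_succ : ∀ n, e (n + 1) = next (e n) := fun n =>
    Function.iterate_succ_apply' next n α
  have he : ∀ n, e n < omega_1 := by
    intro n
    induction n with
    | zero => exact hα
    | succ n ih => rw [he_succ]; exact hD.1 _ (hnextD _ ih)
  have he_lt : ∀ n, e n < e (n + 1) := fun n => he_succ n ▸ hnext_lt _ (he n)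
  have hlt : ∀ n, e n < ⨆ n, e n := fun n =>
    (he_lt n).trans_le (Ordinal.le_iSup e (n + 1))
  refine ⟨⨆ n, e n, ⟨hC.iSup_mem he he_lt fun n => he_succ n ▸ hnextC _ (he n),
    hD.iSup_mem he he_lt fun n => ⟨e (n + 1), he_succ n ▸ hnextD _ (he n), (he_lt n).le,
      le_rfl⟩⟩, Ordinal.le_iSup e 0, fun ξ hξ => ?_⟩
  obtain ⟨n, hn⟩ := Ordinal.lt_iSup_iff.1 hξ
  exact ⟨η ξ, (he_succ n ▸ hnextη _ (he n) ξ hn).trans (hlt (n + 1)),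
    hP ξ (hn.trans (he n))⟩

end IsClubOmega1

namespace TreeHt

theorem ht_mono (tr : TreeHt T) : Monotone tr.ht := fun _ _ h =>
  h.eq_or_lt.elim (fun h => h ▸ le_rfl) fun h => (tr.ht_lt h).le

theorem le_total_of_le (tr : TreeHt T) {x y t : T} (hx : x ≤ t) (hy : y ≤ t) :
    x ≤ y ∨ y ≤ x := by
  rcases hx.eq_or_lt with rfl | hx
  · exact Or.inr hy
  rcases hy.eq_or_lt with rfl | hy
  · exact Or.inl hx.le
  rcases eq_or_ne x y with rfl | hxy
  · exact Or.inl le_rfl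
  exact tr.chain_below t hx hy hxy

theorem le_of_le_of_le_of_ht_le (tr : TreeHt T) {x y t : T} (hx : x ≤ t) (hy : y ≤ t)
    (h : tr.ht x ≤ tr.ht y) : x ≤ y := by
  rcases tr.le_total_of_le hx hy with hxy | hyx
  · exact hxy
  rcases hyx.eq_or_lt with rfl | hyx
  · exact le_rfl
  exact absurd (tr.ht_lt hyx) h.not_gt

theorem eq_of_le_of_le_of_ht_eq (tr : TreeHt T) {x y t : T} (hx : x ≤ t) (hy : y ≤ t)
    (h : tr.ht x = tr.ht y) : x = y :=
  (tr.le_of_le_of_le_of_ht_le hx hy h.le).antisymm (tr.le_of_le_of_le_of_ht_le hy hx h.ge)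

theorem exists_le_ht_eq (tr : TreeHt T) (t : T) {ξ : Ordinal} (h : ξ ≤ tr.ht t) :
    ∃ x ≤ t, tr.ht x = ξ := by
  rcases h.eq_or_lt with rfl | h
  · exact ⟨t, le_rfl, rfl⟩
  obtain ⟨x, hxt, hx⟩ := tr.exists_below t ξ h
  exact ⟨x, hxt.le, hx⟩

/-- `tr.cone s D` is `T_s↾D`. -/
def cone (tr : TreeHt T) (s : T) (D : Set Ordinal) : Set T := {t | s ≤ t ∧ tr.ht t ∈ D}

theorem cone_anti (tr : TreeHt T) {s s' : T} (h : s ≤ s') (D : Set Ordinal) :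
    tr.cone s' D ⊆ tr.cone s D := fun _ ht => ⟨h.trans ht.1, ht.2⟩

def IsPruned (tr : TreeHt T) : Prop :=
  ∀ t β, tr.ht t ≤ β → β < omega_1 → ∃ t', t ≤ t' ∧ tr.ht t' = β

end TreeHt

/-- The minimal elements of `U` form an antichain. -/
theorem IsSuslin.exists_lt_omega_1_forall_exists_le {tr : TreeHt T} (htr : IsSuslin tr)
    (U : Set T) : ∃ α < omega_1, ∀ u ∈ U, ∃ m ∈ U, m ≤ u ∧ tr.ht m < α := by
  set M := {m | Minimal (· ∈ U) m}
  have hM : M.Countable := htr.2 M fun x hx y hy hxy =>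
    ⟨fun h => hxy (hy.eq_of_le hx.prop h), fun h => hxy (hx.eq_of_le hy.prop h).symm⟩
  have := hM.to_subtype
  obtain ⟨α, hα, hMα⟩ :=
    exists_lt_omega_1_forall_lt (f := fun m : M => tr.ht m) fun m => htr.1.1.1 m
  refine ⟨α, hα, fun u hu => ?_⟩
  have hwf : WellFounded ((· < ·) : T → T → Prop) :=
    Subrelation.wf (fun h => tr.ht_lt h) (InvImage.wf tr.ht wellFounded_lt)
  obtain ⟨m, ⟨hmU, hmu⟩, hmin⟩ := hwf.has_min {x | x ∈ U ∧ x ≤ u} ⟨u, hu, le_rfl⟩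
  have hm : m ∈ M := ⟨hmU, fun x hxU hxm =>
    (hxm.eq_or_lt.resolve_right (hmin x ⟨hxU, hxm.trans hmu⟩)).ge⟩
  exact ⟨m, hmU, hmu, hMα ⟨m, hm⟩⟩

theorem pair_mem_derivedTreeSet {tr : TreeHt T} {a b x y : T} (hx : a ≤ x) (hy : b ≤ y)
    (h : tr.ht x = tr.ht y) : ![x, y] ∈ derivedTreeSet tr ![a, b] :=
  ⟨Fin.forall_fin_two.2 ⟨hx, hy⟩, tr.ht x, Fin.forall_fin_two.2 ⟨rfl, h.symm⟩⟩

namespace IsFullSuslin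

variable {tr : TreeHt T}

theorem ht_lt_omega_1 (hR : IsFullSuslin tr) (t : T) : tr.ht t < omega_1 :=
  hR.1.1.1.1 t

theorem isPruned (hR : IsFullSuslin tr) : tr.IsPruned := by
  intro t β htβ hβ
  -- the derived tree `T_t`, being Suslin, has nodes on every countable level
  obtain ⟨dtr, hdht, hdS⟩ := hR.2 0 (tr.ht t) (hR.ht_lt_omega_1 t) ![t]
    (fun i j _ => Subsingleton.elim (α := Fin 1) i j) fun i => by fin_cases i; rfl
  obtain ⟨x, hx⟩ := hdS.1.1.2.1 (β - tr.ht t) ((Ordinal.sub_le_self β _).trans_lt hβ)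
  have htx : t ≤ x.1 0 := x.2.1 0
  refine ⟨x.1 0, htx, ?_⟩
  have hsub : tr.ht (x.1 0) - tr.ht t = β - tr.ht t := (hdht x).symm.trans hx
  rw [← Ordinal.add_sub_cancel_of_le (tr.ht_mono htx), hsub, Ordinal.add_sub_cancel_of_le htβ]

/-- Otherwise the cone above `x` would be a chain, and pruning makes it uncountable. -/
theorem exists_incomparable (hR : IsFullSuslin tr) (x : T) :
    ∃ y₁ y₂, x ≤ y₁ ∧ x ≤ y₂ ∧ ¬ y₁ ≤ y₂ ∧ ¬ y₂ ≤ y₁ := by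
  by_contra! hcon
  have hchain : IsChain (· ≤ ·) (Ici x) := fun a ha b hb _ =>
    or_iff_not_imp_left.2 (hcon a b ha hb)
  have := (hR.1.1.2 _ hchain).to_subtype
  obtain ⟨α, hα, hbound⟩ :=
    exists_lt_omega_1_forall_lt (f := fun y : Ici x => tr.ht y) fun y => hR.ht_lt_omega_1 y
  obtain ⟨y, hxy, hy⟩ :=
    hR.isPruned x (max α (tr.ht x)) (le_max_right _ _) (max_lt hα (hR.ht_lt_omega_1 x))
  exact (hbound ⟨y, hxy⟩).not_ge (hy ▸ le_max_left _ _)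

theorem exists_ne_of_isUnboundedOmega1 (hR : IsFullSuslin tr) (x : T) {E : Set Ordinal}
    (hE : IsUnboundedOmega1 E) :
    ∃ γ ∈ E, ∃ z₁ z₂, x ≤ z₁ ∧ x ≤ z₂ ∧ z₁ ≠ z₂ ∧ tr.ht z₁ = γ ∧ tr.ht z₂ = γ := by
  obtain ⟨y₁, y₂, hxy₁, hxy₂, hy₁₂, hy₂₁⟩ := hR.exists_incomparable x
  obtain ⟨γ, hγE, hyγ, hγ⟩ :=
    hE (max (tr.ht y₁) (tr.ht y₂)) (max_lt (hR.ht_lt_omega_1 y₁) (hR.ht_lt_omega_1 y₂))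
  obtain ⟨z₁, hyz₁, hz₁⟩ := hR.isPruned y₁ γ ((le_max_left _ _).trans hyγ) hγ
  obtain ⟨z₂, hyz₂, hz₂⟩ := hR.isPruned y₂ γ ((le_max_right _ _).trans hyγ) hγ
  refine ⟨γ, hγE, z₁, z₂, hxy₁.trans hyz₁, hxy₂.trans hyz₂, ?_, hz₁, hz₂⟩
  rintro rfl
  exact (tr.le_total_of_le hyz₁ hyz₂).elim hy₁₂ hy₂₁

/-- Pairs `(r, u)` with `u ≠ h r` at levels of `E` are dense in `T_{s₁} ⊗ T_{s₀}` (by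
splitting) and upward closed (by monotonicity of `h`); as the derived tree is Suslin, they are
generated by those below a countable level, which is absurd at the pair `(r, h r)` above that
level. -/
theorem not_strictMonoOn_cone (hR : IsFullSuslin tr) {s₁ s₀ : T} (hne : s₁ ≠ s₀)
    (hht : tr.ht s₁ = tr.ht s₀) {E : Set Ordinal} (hE : IsUnboundedOmega1 E) {h : T → T}
    (h_le : ∀ r ∈ tr.cone s₁ E, s₀ ≤ h r) (h_ht : ∀ r ∈ tr.cone s₁ E, tr.ht (h r) = tr.ht r) :
    ¬ StrictMonoOn h (tr.cone s₁ E) := by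
  intro hmono
  set δ := tr.ht s₁
  obtain ⟨dtr, hdht, hdS⟩ := hR.2 1 δ (hR.ht_lt_omega_1 s₁) ![s₁, s₀]
    (by intro i j; fin_cases i <;> fin_cases j <;> simp [hne, hne.symm])
    (fun i => by fin_cases i <;> simp [δ, hht])
  obtain ⟨α, hα, hU⟩ := hdS.exists_lt_omega_1_forall_exists_le
    {x : derivedTreeSet tr ![s₁, s₀] | tr.ht (x.1 0) ∈ E ∧ x.1 1 ≠ h (x.1 0)}
  obtain ⟨γ, hγE, hδαγ, hγ⟩ := hE (δ + α) (add_lt_omega_1 (hR.ht_lt_omega_1 s₁) hα)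
  obtain ⟨r, hs₁r, hr⟩ := hR.isPruned s₁ γ (le_self_add.trans hδαγ) hγ
  have hrE : r ∈ tr.cone s₁ E := ⟨hs₁r, hr ▸ hγE⟩
  obtain ⟨γ', hγ'E, z₁, z₂, hz₁, hz₂, hz, hz₁γ', hz₂γ'⟩ :=
    hR.exists_ne_of_isUnboundedOmega1 (h r) hE
  obtain ⟨r', hrr', hr'⟩ := hR.isPruned r γ'
    (by rw [← hz₁γ', ← h_ht r hrE]; exact tr.ht_mono hz₁) (hz₁γ' ▸ hR.ht_lt_omega_1 z₁)
  obtain ⟨u, hu, hhru, hu_ht⟩ : ∃ u, u ≠ h r' ∧ h r ≤ u ∧ tr.ht u = γ' := by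
    by_cases hz₁r' : z₁ = h r'
    · exact ⟨z₂, fun h₂ => hz (hz₁r'.trans h₂.symm), hz₂, hz₂γ'⟩
    · exact ⟨z₁, hz₁r', hz₁, hz₁γ'⟩
  let P : derivedTreeSet tr ![s₁, s₀] :=
    ⟨![r, h r], pair_mem_derivedTreeSet hs₁r (h_le r hrE) (h_ht r hrE).symm⟩
  let e : derivedTreeSet tr ![s₁, s₀] := ⟨![r', u],
    pair_mem_derivedTreeSet (hs₁r.trans hrr') ((h_le r hrE).trans hhru) (hr'.trans hu_ht.symm)⟩
  have hPe : P ≤ e := by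
    intro i
    fin_cases i
    exacts [hrr', hhru]
  obtain ⟨m, ⟨hmE, hmh⟩, hme, hmα⟩ :=
    hU e ⟨by simpa [e, hr'] using hγ'E, by simpa [e] using hu⟩
  have hPα : α ≤ dtr.ht P := by
    rw [hdht P]
    exact Ordinal.le_sub_of_add_le (hr ▸ hδαγ)
  have hmP : m ≤ P := dtr.le_of_le_of_le_of_ht_le hme hPe (hmα.trans_le hPα).le
  have hm0 : m.1 0 ∈ tr.cone s₁ E := ⟨m.2.1 0, hmE⟩
  have hhm : h (m.1 0) ≤ h r := hmono.monotoneOn hm0 hrE (hmP 0)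
  refine hmh (tr.eq_of_le_of_le_of_ht_eq (hmP 1) hhm ?_)
  obtain ⟨ε, hε⟩ := m.2.2
  rw [h_ht _ hm0, hε 0, hε 1]

end IsFullSuslin

def levelsNotLowered (trT : TreeHt T) (trS : TreeHt S) (C : Set Ordinal) (g : T → S) :
    Set Ordinal :=
  {γ | γ ∈ C ∧ ∀ t, trT.ht t = γ → γ ≤ trS.ht (g t)}

/-- Only countably many nodes of `X` are mapped below level `l`. -/
theorem exists_bound_le_ht_of_injOn (trT : TreeHt T) (trS : TreeHt S)
    (hS : ∀ α, (trS.level α).Countable) {X : Set T} (hX : ∀ t ∈ X, trT.ht t < omega_1)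
    {g : T → S} (hg : InjOn g X) {l : Ordinal} (hl : l < omega_1) :
    ∃ B < omega_1, ∀ t ∈ X, B ≤ trT.ht t → l ≤ trS.ht (g t) := by
  set Z := {t ∈ X | trS.ht (g t) < l}
  have hZ : Z.Countable :=
    MapsTo.countable_of_injOn (t := ⋃ ξ ∈ Iio l, trS.level ξ)
      (fun t ht => mem_biUnion (show trS.ht (g t) ∈ Iio l from ht.2) rfl)
      (hg.mono fun t ht => ht.1) ((countable_Iio_of_lt_omega_1 hl).biUnion fun ξ _ => hS ξ)
  have := hZ.to_subtype
  obtain ⟨B, hB, hZB⟩ :=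
    exists_lt_omega_1_forall_lt (f := fun t : Z => trT.ht t) fun t => hX t t.2.1
  exact ⟨B, hB, fun t ht hBt => not_lt.1 fun hlt => (hZB ⟨t, ht, hlt⟩).not_ge hBt⟩

theorem isUnboundedOmega1_levelsNotLowered_inter {trT : TreeHt T} {trS : TreeHt S}
    (hS : ∀ α, (trS.level α).Countable) {C D : Set Ordinal} (hC : IsClubOmega1 C)
    (hD : IsClubOmega1 D) {g : T → S} (hg : InjOn g {t | trT.ht t ∈ C}) :
    IsUnboundedOmega1 (levelsNotLowered trT trS C g ∩ D) := by
  intro α hα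
  obtain ⟨γ, ⟨hγC, hγD⟩, hαγ, hγ⟩ := hC.exists_inter_closed hD
    (P := fun ξ B => ∀ t, trT.ht t ∈ C → B ≤ trT.ht t → ξ + 1 ≤ trS.ht (g t))
    (fun ξ hξ => exists_bound_le_ht_of_injOn trT trS hS (fun t ht => hC.1 _ ht) hg
      (add_one_lt_omega_1 hξ)) hα
  refine ⟨γ, ⟨⟨hγC, fun t ht => not_lt.1 fun hlt => ?_⟩, hγD⟩, hαγ, hC.1 γ hγC⟩
  obtain ⟨B, hBγ, hB⟩ := hγ _ hlt
  exact (lt_add_one _).not_ge (hB t (ht ▸ hγC) (ht ▸ hBγ.le))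

structure IsLevelEmbeddingOn (trT : TreeHt T) (trS : TreeHt S) (X : Set T) (f : T → S) :
    Prop where
  strictMonoOn : StrictMonoOn f X
  injOn : InjOn f X
  ht_map : ∀ t ∈ X, trS.ht (f t) = trT.ht t

namespace IsLevelEmbeddingOn

variable {trT : TreeHt T} {trS : TreeHt S} {f : T → S} {s : T} {D : Set Ordinal}

theorem mono {X Y : Set T} (hf : IsLevelEmbeddingOn trT trS X f) (hYX : Y ⊆ X) :
    IsLevelEmbeddingOn trT trS Y f :=
  ⟨hf.strictMonoOn.mono hYX, hf.injOn.mono hYX, fun t ht => hf.ht_map t (hYX ht)⟩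

theorem le_of_map_le (hf : IsLevelEmbeddingOn trT trS (trT.cone s D) f) {p q : T}
    (hp : p ∈ trT.cone s D) (hq : q ∈ trT.cone s D) (hpq : f p ≤ f q) : p ≤ q := by
  have hht : trT.ht p ≤ trT.ht q := by
    rw [← hf.ht_map p hp, ← hf.ht_map q hq]
    exact trS.ht_mono hpq
  obtain ⟨p', hp'q, hp'⟩ := trT.exists_le_ht_eq q hht
  have hp'mem : p' ∈ trT.cone s D :=
    ⟨trT.le_of_le_of_le_of_ht_le hq.1 hp'q (hp' ▸ trT.ht_mono hp.1), hp' ▸ hp.2⟩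
  have hfp' : f p' = f p := trS.eq_of_le_of_le_of_ht_eq
    (hf.strictMonoOn.monotoneOn hp'mem hq hp'q) hpq
    (by rw [hf.ht_map p' hp'mem, hf.ht_map p hp, hp'])
  exact hf.injOn hp'mem hp hfp' ▸ hp'q

theorem exists_map_eq_of_le (hf : IsLevelEmbeddingOn trT trS (trT.cone s D) f) {r : T}
    (hr : r ∈ trT.cone s D) {a : S} (har : a ≤ f r) (haD : trS.ht a ∈ D)
    (hsa : trT.ht s ≤ trS.ht a) : ∃ p ∈ trT.cone s D, f p = a := by
  obtain ⟨p, hpr, hp⟩ := trT.exists_le_ht_eq r (hf.ht_map r hr ▸ trS.ht_mono har)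
  have hpmem : p ∈ trT.cone s D := ⟨trT.le_of_le_of_le_of_ht_le hr.1 hpr (hp ▸ hsa), hp ▸ haD⟩
  exact ⟨p, hpmem, trS.eq_of_le_of_le_of_ht_eq (hf.strictMonoOn.monotoneOn hpmem hr hpr) har
    (by rw [hf.ht_map p hpmem, hp])⟩

theorem isSubtree_lowerClosure_image (hf : IsLevelEmbeddingOn trT trS (trT.cone s D) f)
    (hT : trT.IsPruned) (hD : IsClubOmega1 D) :
    IsSubtree trS (lowerClosure (f '' trT.cone s D)) := by
  refine ⟨fun a ha b hba => (lowerClosure _).lower hba ha, ?_⟩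
  rintro a ⟨_, ⟨r, hr, rfl⟩, har⟩ β haβ hβ
  obtain ⟨γ, hγD, hγ⟩ := hD.2.1 (max β (trT.ht r)) (max_lt hβ (hD.1 _ hr.2))
  obtain ⟨r', hrr', hr'⟩ := hT r γ ((le_max_right _ _).trans hγ) (hD.1 γ hγD)
  have hr'mem : r' ∈ trT.cone s D := ⟨hr.1.trans hrr', hr' ▸ hγD⟩
  obtain ⟨b, hbr', hb⟩ := trS.exists_le_ht_eq (f r') (ξ := β)
    (by rw [hf.ht_map r' hr'mem, hr']; exact (le_max_left _ _).trans hγ)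
  refine ⟨b, ⟨f r', ⟨r', hr'mem, rfl⟩, hbr'⟩, ?_, hb⟩
  exact trS.le_of_le_of_le_of_ht_le (har.trans (hf.strictMonoOn.monotoneOn hr hr'mem hrr'))
    hbr' (hb ▸ haβ)

/-- `h r` is the node of `T_{s₀}` on the level of `r` whose `f`-image lies below `g (f r)`. -/
theorem exists_strictMonoOn_cone (hf : IsLevelEmbeddingOn trT trS (trT.cone s D) f)
    {s₁ s₀ : T} (hs₁ : s ≤ s₁) (hs₀ : s ≤ s₀) (hht : trT.ht s₀ ≤ trT.ht s₁) {C : Set Ordinal}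
    {g : S → S} (hgC : ∀ a, trS.ht a ∈ C → g a ∈ lowerClosure (f '' trT.cone s₀ D))
    (hg : StrictMonoOn g {a | trS.ht a ∈ C}) :
    ∃ h : T → T,
      (∀ r ∈ trT.cone s₁ (levelsNotLowered trS trS C g ∩ D), s₀ ≤ h r) ∧
      (∀ r ∈ trT.cone s₁ (levelsNotLowered trS trS C g ∩ D), trT.ht (h r) = trT.ht r) ∧
      StrictMonoOn h (trT.cone s₁ (levelsNotLowered trS trS C g ∩ D)) := by
  have hf₀ := hf.mono (trT.cone_anti hs₀ D)
  have hf₁ := hf.mono (trT.cone_anti hs₁ D)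
  have hpull : ∀ r ∈ trT.cone s₁ (levelsNotLowered trS trS C g ∩ D),
      ∃ p ∈ trT.cone s₀ D, trT.ht p = trT.ht r ∧ f p ≤ g (f r) := by
    rintro r ⟨hs₁r, ⟨hrC, hlow⟩, hrD⟩
    have hfr : trS.ht (f r) = trT.ht r := hf₁.ht_map r ⟨hs₁r, hrD⟩
    obtain ⟨a, hag, ha⟩ := trS.exists_le_ht_eq (g (f r)) (hlow (f r) hfr)
    obtain ⟨_, ⟨w, hw, rfl⟩, hgw⟩ := hgC (f r) (hfr ▸ hrC)
    obtain ⟨p, hp, rfl⟩ := hf₀.exists_map_eq_of_le hw (hag.trans hgw) (ha ▸ hrD)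
      (ha ▸ hht.trans (trT.ht_mono hs₁r))
    exact ⟨p, hp, by rw [← hf₀.ht_map p hp, ha], hag⟩
  choose! h hh_mem hh_ht hh_le using hpull
  refine ⟨h, fun r hr => (hh_mem r hr).1, hh_ht, fun r₁ hr₁ r₂ hr₂ hlt => ?_⟩
  have hht₁₂ : trT.ht r₁ < trT.ht r₂ := trT.ht_lt hlt
  have hgf : g (f r₁) < g (f r₂) := hg
    (show trS.ht (f r₁) ∈ C from (hf₁.ht_map r₁ ⟨hr₁.1, hr₁.2.2⟩).symm ▸ hr₁.2.1.1)
    (show trS.ht (f r₂) ∈ C from (hf₁.ht_map r₂ ⟨hr₂.1, hr₂.2.2⟩).symm ▸ hr₂.2.1.1)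
    (hf₁.strictMonoOn ⟨hr₁.1, hr₁.2.2⟩ ⟨hr₂.1, hr₂.2.2⟩ hlt)
  have hfh : f (h r₁) ≤ f (h r₂) := trS.le_of_le_of_le_of_ht_le
    ((hh_le r₁ hr₁).trans hgf.le) (hh_le r₂ hr₂) (by
      rw [hf₀.ht_map _ (hh_mem r₁ hr₁), hf₀.ht_map _ (hh_mem r₂ hr₂), hh_ht r₁ hr₁,
        hh_ht r₂ hr₂]
      exact hht₁₂.le)
  refine (hf₀.le_of_map_le (hh_mem r₁ hr₁) (hh_mem r₂ hr₂) hfh).lt_of_ne fun heq => hht₁₂.ne ?_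
  rw [← hh_ht r₁ hr₁, ← hh_ht r₂ hr₂, heq]

end IsLevelEmbeddingOn

/-- If `R` is a full Suslin tree and `A` is a club-minimal Aronszajn tree, then for no
`s ∈ R` and no club `D` is there a level-preserving order-preserving injection of
`R_s↾D` into `A`. -/
theorem statement1 (R A : Type*) [PartialOrder R] [PartialOrder A]
    (trR : TreeHt R) (trA : TreeHt A)
    (hR : IsFullSuslin trR) (hA : IsAronszajn trA) (hmin : ClubMinimal trA) :
    ¬ ∃ (s : R) (D : Set Ordinal) (f : R → A), IsClubOmega1 D ∧
      (∀ t₁ t₂ : R, s ≤ t₁ → s ≤ t₂ → trR.ht t₁ ∈ D → trR.ht t₂ ∈ D →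
        t₁ < t₂ → f t₁ < f t₂) ∧
      (∀ t₁ t₂ : R, s ≤ t₁ → s ≤ t₂ → trR.ht t₁ ∈ D → trR.ht t₂ ∈ D →
        f t₁ = f t₂ → t₁ = t₂) ∧
      (∀ t : R, s ≤ t → trR.ht t ∈ D → trA.ht (f t) = trR.ht t) := by
  rintro ⟨s, D, f, hD, hf_lt, hf_inj, hf_ht⟩
  have hf : IsLevelEmbeddingOn trR trA (trR.cone s D) f :=
    ⟨fun _ h₁ _ h₂ => hf_lt _ _ h₁.1 h₂.1 h₁.2 h₂.2,
      fun _ h₁ _ h₂ => hf_inj _ _ h₁.1 h₂.1 h₁.2 h₂.2, fun t ht => hf_ht t ht.1 ht.2⟩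
  obtain ⟨δ, -, s₁, s₀, hs₁, hs₀, hne, hδ₁, hδ₀⟩ :=
    hR.exists_ne_of_isUnboundedOmega1 s hD.isUnboundedOmega1
  obtain ⟨C, hC, g, hgC, hg_lt, hg_inj⟩ :=
    hmin _ ((hf.mono (trR.cone_anti hs₀ D)).isSubtree_lowerClosure_image hR.isPruned hD)
  obtain ⟨h, hh_le, hh_ht, hh_mono⟩ := hf.exists_strictMonoOn_cone hs₁ hs₀
    (hδ₀.trans hδ₁.symm).le hgC fun a ha b hb => hg_lt a b ha hb
  exact hR.not_strictMonoOn_cone hne (hδ₁.trans hδ₀.symm)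
    (isUnboundedOmega1_levelsNotLowered_inter hA.1.2.2 hC hD fun a ha b hb => hg_inj a b ha hb)
    hh_le hh_ht hh_mono
end
end

section
/- ω and −ω are the only minimal infinite linear orders: an infinite linear order L order-embeds into every one of its infinite suborders if and only if L is order-isomorphic to ℕ or to ℕ with the reversed order. -/
/-!
By the infinitary Erdős–Szekeres theorem an infinite linear order contains a copy of `ω` or of
`-ω`. A minimal order embeds into that copy, and every infinite suborder of `ω` is `ω` again;
the case of `-ω` is the same argument in the order dual, minimality being invariant under
duality and isomorphism.
-/

open OrderDual

theorem OrderEmbedding.nonempty_orderIso_nat {α : Type*} [LinearOrder α] [Infinite α]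
    (e : α ↪o ℕ) : Nonempty (α ≃o ℕ) :=
  have : Infinite (Set.range e) := (Set.infinite_range_of_injective e.injective).to_subtype
  ⟨e.orderIso.trans (Nat.Subtype.orderIsoOfNat _).symm⟩

def IsMinimalOrder (α : Type*) [LE α] : Prop :=
  ∀ S : Set α, S.Infinite → Nonempty (α ↪o S)

namespace IsMinimalOrder

theorem nat : IsMinimalOrder ℕ := fun S hS =>
  have : Infinite S := hS.to_subtype
  ⟨(Nat.Subtype.orderIsoOfNat S).toOrderEmbedding⟩

section PartialOrder

variable {α β : Type*} [PartialOrder α] [PartialOrder β]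

theorem of_orderIso (h : IsMinimalOrder α) (e : α ≃o β) : IsMinimalOrder β := by
  intro S hS
  obtain ⟨g⟩ := h (e ⁻¹' S) (hS.preimage (e.range_eq ▸ S.subset_univ))
  exact ⟨.ofMapLEIff (fun b => ⟨e (g (e.symm b)), (g _).2⟩) fun _ _ => by simp⟩

theorem dual (h : IsMinimalOrder α) : IsMinimalOrder αᵒᵈ := by
  intro S hS
  obtain ⟨g⟩ := h (toDual ⁻¹' S) hS
  exact ⟨.ofMapLEIff (fun a => ⟨toDual (g (ofDual a)).1, (g _).2⟩) fun _ _ => by simp⟩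

end PartialOrder

section LinearOrder

variable {α : Type*} [LinearOrder α]

theorem nonempty_orderIso_nat (h : IsMinimalOrder α) (f : ℕ ↪o α) : Nonempty (α ≃o ℕ) := by
  have : Infinite α := .of_injective f f.injective
  obtain ⟨g⟩ := h (Set.range f) (Set.infinite_range_of_injective f.injective)
  exact OrderEmbedding.nonempty_orderIso_nat (g.trans f.orderIso.symm.toOrderEmbedding)

theorem iff_nonempty_orderIso [Infinite α] :
    IsMinimalOrder α ↔ Nonempty (α ≃o ℕ) ∨ Nonempty (α ≃o ℕᵒᵈ) := by
  refine ⟨fun h => ?_, ?_⟩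
  · obtain ⟨f, hf | hf⟩ := Infinite.exists_strictMono_or_strictAnti α
    · exact .inl (h.nonempty_orderIso_nat (.ofStrictMono f hf))
    · obtain ⟨e⟩ := h.dual.nonempty_orderIso_nat (.ofStrictMono _ hf.dual_right)
      exact .inr ⟨(OrderIso.dualDual α).trans e.dual⟩
  · rintro (⟨⟨e⟩⟩ | ⟨⟨e⟩⟩)
    · exact nat.of_orderIso e.symm
    · exact nat.dual.of_orderIso e.symm

end LinearOrder

end IsMinimalOrder

/-- `ω` and `-ω` are the only minimal infinite linear orders: an infinite linear order `L`
order-embeds into every one of its infinite suborders iff `L` is order-isomorphic to `ℕ`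
or to `ℕ` with the reversed order. -/
theorem statement10 (L : Type*) [LinearOrder L] [Infinite L] :
    (∀ S : Set L, S.Infinite → Nonempty (L ↪o ↥S)) ↔
      Nonempty (L ≃o ℕ) ∨ Nonempty (L ≃o ℕᵒᵈ) :=
  IsMinimalOrder.iff_nonempty_orderIso
end

section
/- (Sierpiński) Assume CH. Then no uncountable suborder of the reals is minimal: for every uncountable set X ⊆ ℝ there exists an uncountable Y ⊆ X such that there is no order embedding of X (with the order induced from ℝ) into Y. -/
/-!
Under CH there are only `ℵ₁` strictly increasing maps `X → ℝ`: composed with `arctan`, each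
extends to a monotone map `ℝ → ℝ`, and a monotone map is determined by its values on `ℚ` and at
its countably many discontinuities, so there are at most `𝔠` of them. A recursion of length `ω₁`
picks a point `z_h` in the range of each such `h` while keeping `ℵ₁` points of `X` away from all
the `z_h`. Then `Y = X \ {z_h}` is uncountable but contains the range of no embedding `X ↪o Y`.
-/

universe u

open Cardinal Set Topology Function Real

theorem ContinuousAt.eq_of_eqOn_dense {X Y : Type*} [TopologicalSpace X] [TopologicalSpace Y]
    [T2Space Y] {f g : X → Y} {s : Set X} {x : X} (hs : Dense s) (h : EqOn f g s)
    (hf : ContinuousAt f x) (hg : ContinuousAt g x) : f x = g x :=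
  haveI : (𝓝[s] x).NeBot := mem_closure_iff_nhdsWithin_neBot.1 (hs x)
  tendsto_nhds_unique (hf.tendsto.mono_left nhdsWithin_le_nhds)
    ((hg.tendsto.mono_left nhdsWithin_le_nhds).congr' (eventuallyEq_nhdsWithin_of_eqOn h).symm)

theorem eq_of_eqOn_dense_of_discontinuities_subset {X Y : Type*} [TopologicalSpace X]
    [TopologicalSpace Y] [T2Space Y] {f g : X → Y} {s : Set X} (hs : Dense s)
    (hfs : {x | ¬ContinuousAt f x} ⊆ s) (hgs : {x | ¬ContinuousAt g x} ⊆ s)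
    (h : EqOn f g s) : f = g := by
  funext x
  by_cases hx : x ∈ s
  · exact h hx
  · exact (not_not.1 fun hf => hx (hfs hf)).eq_of_eqOn_dense hs h
      (not_not.1 fun hg => hx (hgs hg))

theorem mk_monotone_le_continuum : #{f : ℝ → ℝ // Monotone f} ≤ 𝔠 := by
  let S (f : {f : ℝ → ℝ // Monotone f}) : Set ℝ :=
    range ((↑) : ℚ → ℝ) ∪ {x | ¬ContinuousAt f.1 x}
  have hS f : ∃ e : ℕ → ℝ, range e = S f :=
    ((countable_range _).union f.2.countable_not_continuousAt).exists_eq_range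
      ⟨0, .inl ⟨0, Rat.cast_zero⟩⟩ |>.imp fun _ => Eq.symm
  choose e he using hS
  have hinj : Injective fun f n => (e f n, f.1 (e f n)) := by
    intro f g hfg
    have hfg' n := Prod.ext_iff.1 (congrFun hfg n)
    have heq : e f = e g := funext fun n => (hfg' n).1
    have hdense : Dense (S f) := Rat.denseRange_cast.mono subset_union_left
    refine Subtype.ext (eq_of_eqOn_dense_of_discontinuities_subset hdense subset_union_right
      (he f ▸ heq ▸ he g ▸ subset_union_right) ?_)
    rintro _ hx
    rw [← he f] at hx
    obtain ⟨n, rfl⟩ := hx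
    simpa [heq] using (hfg' n).2
  calc #{f : ℝ → ℝ // Monotone f} ≤ #(ℕ → ℝ × ℝ) := mk_le_of_injective hinj
    _ = 𝔠 := by simp [mk_real]

theorem exists_monotone_eqOn_arctan_comp {s : Set ℝ} {h : s → ℝ} (hh : Monotone h) :
    ∃ g : ℝ → ℝ, Monotone g ∧ ∀ x : s, g x = arctan (h x) := by
  have hmono : MonotoneOn (extend (↑) (arctan ∘ h) 0) s := by
    intro x hx y hy hxy
    rw [Subtype.val_injective.extend_apply _ _ ⟨x, hx⟩,
      Subtype.val_injective.extend_apply _ _ ⟨y, hy⟩]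
    exact arctan_mono (hh hxy)
  have hbdd : extend (↑) (arctan ∘ h) 0 '' s ⊆ Icc (-(π / 2)) (π / 2) := by
    rintro _ ⟨x, hx, rfl⟩
    rw [Subtype.val_injective.extend_apply _ _ ⟨x, hx⟩]
    exact ⟨(neg_pi_div_two_lt_arctan _).le, (arctan_lt_pi_div_two _).le⟩
  obtain ⟨g, hg, hgs⟩ := hmono.exists_monotone_extension (bddBelow_Icc.mono hbdd)
    (bddAbove_Icc.mono hbdd)
  exact ⟨g, hg, fun x => by rw [← hgs x.2, Subtype.val_injective.extend_apply]; rfl⟩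

theorem mk_strictMono_le_continuum (s : Set ℝ) : #{h : s → ℝ // StrictMono h} ≤ 𝔠 := by
  choose g hg using fun h : {h : s → ℝ // StrictMono h} =>
    exists_monotone_eqOn_arctan_comp h.2.monotone
  let G h : {f : ℝ → ℝ // Monotone f} := ⟨g h, (hg h).1⟩
  refine (mk_le_of_injective (f := G) fun h₁ h₂ h => ?_).trans mk_monotone_le_continuum
  ext x
  refine arctan_injective ?_
  simpa only [G, (hg h₁).2, (hg h₂).2] using congrFun (congrArg Subtype.val h) x

section Transversal

variable {α : Type u}

theorem exists_pair_mem_diff {A X Z W : Set α} (hA : ¬A.Countable) (hX : ¬X.Countable)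
    (hZ : Z.Countable) (hW : W.Countable) :
    ∃ p : α × α, p.1 ∈ A \ W ∧ p.2 ∈ X \ insert p.1 (Z ∪ W) := by
  obtain ⟨z, hz⟩ := sdiff_nonempty.2 fun h => hA (hW.mono h)
  obtain ⟨w, hw⟩ := sdiff_nonempty.2 fun h => hX (((hZ.union hW).insert z).mono h)
  exact ⟨(z, w), hz, hw⟩

theorem exists_selector_and_injective_disjoint {ι : Type*} [LinearOrder ι] [WellFoundedLT ι]
    (hι : ∀ i : ι, (Iio i).Countable) {A : ι → Set α} (hA : ∀ i, ¬(A i).Countable)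
    {X : Set α} (hX : ¬X.Countable) :
    ∃ z w : ι → α, (∀ i, z i ∈ A i) ∧ (∀ i, w i ∈ X) ∧ Injective w ∧
      Disjoint (range z) (range w) := by
  have step (i : ι) (prev : ∀ j < i, α × α) := by
    have := (hι i).to_subtype
    exact exists_pair_mem_diff (hA i) hX (countable_range fun j : Iio i => (prev j j.2).1)
      (countable_range fun j : Iio i => (prev j j.2).2)
  choose F hF using step
  let P : ι → α × α := wellFounded_lt.fix F
  have hP i : (P i).1 ∈ A i \ range (fun j : Iio i => (P j).2) ∧
      (P i).2 ∈ X \ insert (P i).1 (range (fun j : Iio i => (P j).1) ∪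
        range (fun j : Iio i => (P j).2)) := by
    rw [show P i = F i fun j _ => P j from wellFounded_lt.fix_eq F i]
    exact hF i _
  refine ⟨fun i => (P i).1, fun i => (P i).2, fun i => (hP i).1.1, fun i => (hP i).2.1, ?_, ?_⟩
  · intro i j hij
    by_contra hne
    rcases lt_or_gt_of_ne hne with h | h
    · exact (hP j).2.2 (.inr (.inr ⟨⟨i, h⟩, hij⟩))
    · exact (hP i).2.2 (.inr (.inr ⟨⟨j, h⟩, hij.symm⟩))
  · refine disjoint_left.2 ?_
    rintro _ ⟨i, rfl⟩ ⟨j, hji⟩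
    rcases lt_trichotomy i j with h | rfl | h
    · exact (hP j).2.2 (.inr (.inl ⟨⟨i, h⟩, hji.symm⟩))
    · exact (hP i).2.2 (.inl hji)
    · exact (hP i).1.2 ⟨⟨j, h⟩, hji⟩

theorem exists_uncountable_subset_forall_not_subset {𝒜 : Set (Set α)} (h𝒜 : #𝒜 ≤ ℵ₁)
    (hA : ∀ A ∈ 𝒜, ¬A.Countable) {X : Set α} (hX : ¬X.Countable) :
    ∃ Y ⊆ X, ¬Y.Countable ∧ ∀ A ∈ 𝒜, ¬A ⊆ Y := by
  rcases 𝒜.eq_empty_or_nonempty with rfl | ⟨A₀, hA₀⟩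
  · exact ⟨X, subset_rfl, hX, fun _ => False.elim⟩
  let ι := (ℵ₁ : Cardinal.{u}).ord.ToType
  have hι : #ι = ℵ₁ := by simp [ι]
  obtain ⟨emb⟩ : Nonempty (𝒜 ↪ ι) := by rwa [← le_def, hι]
  have : Nonempty 𝒜 := ⟨⟨A₀, hA₀⟩⟩
  let σ : ι → 𝒜 := invFun emb
  have hIio (i : ι) : (Iio i).Countable :=
    le_aleph0_iff_set_countable.1 (lt_aleph_one_iff.1 (hι ▸ mk_Iio_lt i (by simp [ι]) :))
  obtain ⟨z, w, hz, hw, hwinj, hzw⟩ :=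
    exists_selector_and_injective_disjoint hIio (fun i => hA _ (σ i).2) hX
  refine ⟨X \ range z, sdiff_subset, fun hc => ?_, fun A hA hAY => ?_⟩
  · have hwY : range w ⊆ X \ range z := by
      rintro _ ⟨i, rfl⟩
      exact ⟨hw i, hzw.notMem_of_mem_right ⟨i, rfl⟩⟩
    have hw_le := le_aleph0_iff_set_countable.2 (hc.mono hwY)
    rw [mk_range_eq _ hwinj, hι] at hw_le
    exact aleph0_lt_aleph_one.not_ge hw_le
  · obtain ⟨i, hi⟩ := invFun_surjective emb.injective ⟨A, hA⟩
    have hzi : z i ∈ A := by simpa [σ, hi] using hz i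
    exact (hAY hzi).2 ⟨i, rfl⟩

end Transversal

/-- **Sierpiński.** Assume CH.  Then no uncountable suborder of the reals is minimal:
every uncountable `X ⊆ ℝ` has an uncountable subset `Y ⊆ X` such that `X` does not
order-embed into `Y`. -/
theorem statement13 (hCH : Cardinal.mk ℝ = Cardinal.aleph 1)
    (X : Set ℝ) (hX : ¬ X.Countable) :
    ∃ Y : Set ℝ, Y ⊆ X ∧ ¬ Y.Countable ∧ ¬ Nonempty (↥X ↪o ↥Y) := by
  let 𝒜 := range fun h : {h : X → ℝ // StrictMono h} => range h.1
  have h𝒜 : #𝒜 ≤ ℵ₁ :=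
    mk_range_le.trans ((mk_strictMono_le_continuum X).trans (mk_real.symm.trans hCH).le)
  have hA : ∀ A ∈ 𝒜, ¬A.Countable := by
    rintro _ ⟨h, rfl⟩ hc
    exact hX ((Equiv.ofInjective _ h.2.injective).countable_iff.2 hc.to_subtype).to_set
  obtain ⟨Y, hYX, hY, hYA⟩ := exists_uncountable_subset_forall_not_subset h𝒜 hA hX
  refine ⟨Y, hYX, hY, fun ⟨f⟩ => hYA _ ⟨⟨_, (Subtype.strictMono_coe _).comp f.strictMono⟩, rfl⟩ ?_⟩
  rintro _ ⟨x, rfl⟩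
  exact (f x).2
end
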